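/- arXiv:1410.8085 — 3 statements merged into one kernel-verified Lean document; each statement's English description precedes it below -/
import Mathlib

section
/- Let ν, β, γ be real numbers and define the operator F[u] = ν(u²)⁗' + β(u²)''' + γ(u²)' (fifth, third, and first x-derivatives of u²). Then the subspace W₃ = span{1, cos x, sin x} is invariant under F if and only if 16ν - 4β + γ = 0. -/
open Real

/-- The fifth-order dispersive operator `F[u] = ν (u²)⁽⁵⁾ + β (u²)''' + γ (u²)'`. -/
noncomputable def dispOp (ν β γ : ℝ) (g : ℝ → ℝ) (x : ℝ) : ℝ :=
  ν * iteratedDeriv 5 (fun y => (g y) ^ 2) x +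
    β * iteratedDeriv 3 (fun y => (g y) ^ 2) x +
    γ * deriv (fun y => (g y) ^ 2) x

/-!
If `u = a + b cos x + c sin x`, then `u²` is a trigonometric polynomial of degree two whose
frequency-two part is `((b² - c²) / 2) cos 2x + b c sin 2x`. Differentiation rotates each frequency
`k` mode and scales it by `k`, so `F` scales the frequency-one part of `u²` by `ν - β + γ` and its
frequency-two part by `2 (16ν - 4β + γ)`, and kills the constant. For `u = cos x + sin x` the
frequency-two part of `u²` is `sin 2x`, and a nonzero multiple of `cos 2x` does not lie in `W₃`.
-/

noncomputable def trigPolyTwo (A B C D E : ℝ) (x : ℝ) : ℝ :=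
  A + B * cos x + C * sin x + D * cos (2 * x) + E * sin (2 * x)

lemma hasDerivAt_trigPolyTwo (A B C D E x : ℝ) :
    HasDerivAt (trigPolyTwo A B C D E) (trigPolyTwo 0 C (-B) (2 * E) (-2 * D) x) x := by
  have hlin : HasDerivAt (fun y : ℝ => 2 * y) 2 x := by
    simpa using (hasDerivAt_id x).const_mul 2
  have hcos2 := (hasDerivAt_cos (2 * x)).comp x hlin
  have hsin2 := (hasDerivAt_sin (2 * x)).comp x hlin
  refine (((((hasDerivAt_const x A).add ((hasDerivAt_cos x).const_mul B)).add
    ((hasDerivAt_sin x).const_mul C)).add (hcos2.const_mul D)).add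
    (hsin2.const_mul E)).congr_deriv ?_
  simp only [trigPolyTwo]
  ring

lemma deriv_trigPolyTwo (A B C D E : ℝ) :
    deriv (trigPolyTwo A B C D E) = trigPolyTwo 0 C (-B) (2 * E) (-2 * D) :=
  funext fun x => (hasDerivAt_trigPolyTwo A B C D E x).deriv

lemma iteratedDeriv_succ_trigPolyTwo (n : ℕ) (A B C D E : ℝ) :
    iteratedDeriv (n + 1) (trigPolyTwo A B C D E) =
      iteratedDeriv n (trigPolyTwo 0 C (-B) (2 * E) (-2 * D)) := by
  rw [iteratedDeriv_succ', deriv_trigPolyTwo]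

lemma iteratedDeriv_three_trigPolyTwo (A B C D E : ℝ) :
    iteratedDeriv 3 (trigPolyTwo A B C D E) = trigPolyTwo 0 (-C) B (-8 * E) (8 * D) := by
  simp only [iteratedDeriv_succ_trigPolyTwo, iteratedDeriv_zero]
  funext x
  simp only [trigPolyTwo]
  ring

lemma iteratedDeriv_five_trigPolyTwo (A B C D E : ℝ) :
    iteratedDeriv 5 (trigPolyTwo A B C D E) = trigPolyTwo 0 C (-B) (32 * E) (-32 * D) := by
  simp only [iteratedDeriv_succ_trigPolyTwo, iteratedDeriv_zero]
  funext x
  simp only [trigPolyTwo]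
  ring

lemma sq_trigPolyOne (a b c : ℝ) :
    (fun y => (a + b * cos y + c * sin y) ^ 2) =
      trigPolyTwo (a ^ 2 + (b ^ 2 + c ^ 2) / 2) (2 * a * b) (2 * a * c) ((b ^ 2 - c ^ 2) / 2)
        (b * c) := by
  funext x
  simp only [trigPolyTwo, cos_two_mul, sin_two_mul]
  linear_combination c ^ 2 * sin_sq_add_cos_sq x

lemma dispOp_trigPolyOne (ν β γ a b c x : ℝ) :
    dispOp ν β γ (fun y => a + b * cos y + c * sin y) x =
      (ν - β + γ) * (2 * a * c) * cos x - (ν - β + γ) * (2 * a * b) * sin x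
        + (16 * ν - 4 * β + γ) * (2 * b * c) * cos (2 * x)
        - (16 * ν - 4 * β + γ) * (b ^ 2 - c ^ 2) * sin (2 * x) := by
  rw [dispOp, sq_trigPolyOne, iteratedDeriv_five_trigPolyTwo, iteratedDeriv_three_trigPolyTwo,
    deriv_trigPolyTwo]
  simp only [trigPolyTwo]
  ring

/-- Sampling at `0, π, ±π/2`: the constant part is both `K` and `-K`. -/
lemma eq_zero_of_mul_cos_two_mul_eq {K a b c : ℝ}
    (h : ∀ x, K * cos (2 * x) = a + b * cos x + c * sin x) : K = 0 := by
  have h0 := h 0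
  have hpi := h π
  have hhalf := h (π / 2)
  have hneg := h (-(π / 2))
  simp only [mul_zero, cos_zero, sin_zero, mul_div_cancel₀ π two_ne_zero, cos_pi, sin_pi,
    cos_two_mul, cos_neg, sin_neg, cos_pi_div_two, sin_pi_div_two] at h0 hpi hhalf hneg
  linarith

theorem invariant_subspace_iff (ν β γ : ℝ) :
    (∀ a b c : ℝ, ∃ a' b' c' : ℝ, ∀ x : ℝ,
        dispOp ν β γ (fun y => a + b * Real.cos y + c * Real.sin y) x =
          a' + b' * Real.cos x + c' * Real.sin x) ↔
      16 * ν - 4 * β + γ = 0 := by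
  constructor
  · intro hinv
    obtain ⟨a', b', c', h⟩ := hinv 0 1 1
    have hcos : ∀ x, (2 * (16 * ν - 4 * β + γ)) * cos (2 * x) = a' + b' * cos x + c' * sin x := by
      intro x
      rw [← h x, dispOp_trigPolyOne]
      ring
    linarith [eq_zero_of_mul_cos_two_mul_eq hcos]
  · intro h a b c
    refine ⟨0, (ν - β + γ) * (2 * a * c), -((ν - β + γ) * (2 * a * b)), fun x => ?_⟩
    rw [dispOp_trigPolyOne, h]
    ring
end

section
/- Suppose 16ν - 4β + γ = 0 and let μ = 2(ν - β + γ). Then for g(x) = a + b cos x + c sin x, one has ν(g²)⁗' + β(g²)''' + γ(g²)' = μ a c · cos x - μ a b · sin x (the constant component vanishes and the coefficients of cos x and sin x are μac and -μab respectively). -/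
/-!
`g²` lies in the span of `1, cos x, sin x, cos 2x, sin 2x`. The operator `u ↦ ν u⁽⁵⁾ + β u''' + γ u'`
kills constants and maps the mode `p cos kx + q sin kx` to `k (ν k⁴ - β k² + γ)` times the rotated
mode `q cos kx - p sin kx`. The multiplier is `2 (16ν - 4β + γ) = 0` at `k = 2` and `μ / 2` at
`k = 1`, where the mode of `g²` is `2ab cos x + 2ac sin x`.
-/

open Real

noncomputable def fourierMode (k p q : ℝ) (y : ℝ) : ℝ := p * cos (k * y) + q * sin (k * y)

section FourierMode

variable (k p q : ℝ)

theorem hasDerivAt_fourierMode (x : ℝ) :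
    HasDerivAt (fourierMode k p q) (fourierMode k (k * q) (-(k * p)) x) x := by
  have hk : HasDerivAt (fun y => k * y) k x := by simpa using (hasDerivAt_id x).const_mul k
  refine ((((hasDerivAt_cos (k * x)).comp x hk).const_mul p).add
    (((hasDerivAt_sin (k * x)).comp x hk).const_mul q)).congr_deriv ?_
  simp only [fourierMode]
  ring

theorem deriv_fourierMode : deriv (fourierMode k p q) = fourierMode k (k * q) (-(k * p)) :=
  funext fun x => (hasDerivAt_fourierMode k p q x).deriv

theorem contDiff_fourierMode {n : WithTop ℕ∞} : ContDiff ℝ n (fourierMode k p q) := by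
  unfold fourierMode; fun_prop

theorem iteratedDeriv_add_two_fourierMode (n : ℕ) :
    iteratedDeriv (n + 2) (fourierMode k p q) =
      iteratedDeriv n (fourierMode k (-k ^ 2 * p) (-k ^ 2 * q)) := by
  rw [iteratedDeriv_succ', iteratedDeriv_succ', deriv_fourierMode, deriv_fourierMode]
  congr 2 <;> ring

end FourierMode

noncomputable def dispLin (ν β γ : ℝ) (u : ℝ → ℝ) (x : ℝ) : ℝ :=
  ν * iteratedDeriv 5 u x + β * iteratedDeriv 3 u x + γ * deriv u x

section DispLin

variable (ν β γ : ℝ)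

theorem dispOp_eq_dispLin (g : ℝ → ℝ) : dispOp ν β γ g = dispLin ν β γ (fun y => g y ^ 2) := rfl

theorem dispLin_const_add (c : ℝ) (u : ℝ → ℝ) :
    dispLin ν β γ (fun y => c + u y) = dispLin ν β γ u := by
  funext x
  simp only [dispLin, iteratedDeriv_const_add (by norm_num : 0 < 5),
    iteratedDeriv_const_add (by norm_num : 0 < 3), deriv_const_add]

theorem dispLin_add {u v : ℝ → ℝ} (hu : ContDiff ℝ 5 u) (hv : ContDiff ℝ 5 v) :
    dispLin ν β γ (u + v) = dispLin ν β γ u + dispLin ν β γ v := by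
  funext x
  have h3 : ContDiff ℝ 3 u ∧ ContDiff ℝ 3 v := ⟨hu.of_le (by norm_num), hv.of_le (by norm_num)⟩
  simp only [dispLin, Pi.add_apply, iteratedDeriv_add hu.contDiffAt hv.contDiffAt,
    iteratedDeriv_add h3.1.contDiffAt h3.2.contDiffAt,
    deriv_add (hu.differentiable (by norm_num) x) (hv.differentiable (by norm_num) x)]
  ring

theorem dispLin_fourierMode (k p q : ℝ) :
    dispLin ν β γ (fourierMode k p q) =
      fun x => k * (ν * k ^ 4 - β * k ^ 2 + γ) * fourierMode k q (-p) x := by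
  funext x
  simp only [dispLin, iteratedDeriv_add_two_fourierMode, iteratedDeriv_one,
    deriv_fourierMode, fourierMode]
  ring

end DispLin

theorem sq_add_mul_cos_add_mul_sin (a b c y : ℝ) :
    (a + b * cos y + c * sin y) ^ 2 =
      a ^ 2 + (b ^ 2 + c ^ 2) / 2 +
        (fourierMode 1 (2 * a * b) (2 * a * c) + fourierMode 2 ((b ^ 2 - c ^ 2) / 2) (b * c)) y := by
  simp only [Pi.add_apply, fourierMode, one_mul, cos_two_mul, sin_two_mul]
  linear_combination c ^ 2 * sin_sq_add_cos_sq y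

theorem dispOp_on_trig_subspace (ν β γ : ℝ) (h : 16 * ν - 4 * β + γ = 0)
    (μ : ℝ) (hμ : μ = 2 * (ν - β + γ)) (a b c : ℝ) (x : ℝ) :
    dispOp ν β γ (fun y => a + b * Real.cos y + c * Real.sin y) x =
      μ * a * c * Real.cos x - μ * a * b * Real.sin x := by
  simp_rw [dispOp_eq_dispLin, sq_add_mul_cos_add_mul_sin]
  rw [dispLin_const_add, dispLin_add _ _ _ (contDiff_fourierMode ..) (contDiff_fourierMode ..),
    dispLin_fourierMode, dispLin_fourierMode]
  simp only [Pi.add_apply, fourierMode, one_mul, one_pow]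
  linear_combination (2 * (b * c * cos (2 * x) - (b ^ 2 - c ^ 2) / 2 * sin (2 * x))) * h
    - (a * c * cos x - a * b * sin x) * hμ
end

section
/- Let g(x) = a + b cosh(x/2) + c sinh(x/2) and F[u] = β(u²)''' + γ(u²)'. Then β(g²)''' + γ(g²)' lies in span{1, cosh(x/2), sinh(x/2), cosh x, sinh x}, where the coefficient of cosh x is bc(β + γ) and that of sinh x is (β + γ)(b² + c²)/2 (times appropriate constants); hence the subspace span{1, cosh(x/2), sinh(x/2)} is invariant under F iff β + γ = 0. -/
open Real

/-- The operator `F[u] = β (u²)''' + γ (u²)'`. -/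
noncomputable def hypOp (β γ : ℝ) (g : ℝ → ℝ) (x : ℝ) : ℝ :=
  β * iteratedDeriv 3 (fun y => (g y) ^ 2) x + γ * deriv (fun y => (g y) ^ 2) x

noncomputable def H (p q r s t : ℝ) (x : ℝ) : ℝ :=
  p + q * Real.cosh (x / 2) + r * Real.sinh (x / 2) + s * Real.cosh x + t * Real.sinh x

lemma hasDerivAt_H (p q r s t x : ℝ) :
    HasDerivAt (H p q r s t) (H 0 (r/2) (q/2) t s x) x := by
  have hid : HasDerivAt (fun y : ℝ => y / 2) (1/2) x := by
    simpa using (hasDerivAt_id x).div_const 2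
  have hc : HasDerivAt (fun y : ℝ => Real.cosh (y/2)) (Real.sinh (x/2) * (1/2)) x := hid.cosh
  have hs : HasDerivAt (fun y : ℝ => Real.sinh (y/2)) (Real.cosh (x/2) * (1/2)) x := hid.sinh
  have hC : HasDerivAt Real.cosh (Real.sinh x) x := Real.hasDerivAt_cosh x
  have hS : HasDerivAt Real.sinh (Real.cosh x) x := Real.hasDerivAt_sinh x
  have := ((((hasDerivAt_const x p).add (hc.const_mul q)).add (hs.const_mul r)).add
      (hC.const_mul s)).add (hS.const_mul t)
  convert this using 1
  · rfl
  · rfl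
  · funext y; unfold H; simp only [Pi.add_apply]
  unfold H; ring

lemma deriv_H (p q r s t : ℝ) :
    deriv (H p q r s t) = H 0 (r/2) (q/2) t s :=
  funext fun x => (hasDerivAt_H p q r s t x).deriv

lemma iteratedDeriv3_H (p q r s t : ℝ) :
    iteratedDeriv 3 (H p q r s t) = H 0 (r/8) (q/8) t s := by
  rw [show (3:ℕ) = 2+1 from rfl, iteratedDeriv_succ,
    show (2:ℕ) = 1+1 from rfl, iteratedDeriv_succ, iteratedDeriv_one,
    deriv_H, deriv_H, deriv_H]
  funext x; unfold H; ring

lemma sq_eq (a b c : ℝ) :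
    (fun y => (a + b * Real.cosh (y / 2) + c * Real.sinh (y / 2)) ^ 2) =
      H (a^2 + (b^2 - c^2)/2) (2*a*b) (2*a*c) ((b^2 + c^2)/2) (b*c) := by
  funext x
  unfold H
  rw [Real.cosh_eq, Real.sinh_eq, Real.cosh_eq, Real.sinh_eq]
  have h1 : Real.exp x = Real.exp (x/2) * Real.exp (x/2) := by
    rw [← Real.exp_add]; ring_nf
  have h2 : Real.exp (-x) = Real.exp (-(x/2)) * Real.exp (-(x/2)) := by
    rw [← Real.exp_add]; ring_nf
  have h3 : Real.exp (-(x/2)) = (Real.exp (x/2))⁻¹ := Real.exp_neg _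
  have h4 : Real.exp (x/2) ≠ 0 := (Real.exp_pos _).ne'
  rw [h1, h2, h3]
  field_simp
  ring

lemma hypOp_eq (β γ a b c x : ℝ) :
    hypOp β γ (fun y => a + b * Real.cosh (y / 2) + c * Real.sinh (y / 2)) x =
      (β * (2*a*c/8) + γ * (2*a*c/2)) * Real.cosh (x/2)
      + (β * (2*a*b/8) + γ * (2*a*b/2)) * Real.sinh (x/2)
      + (β + γ) * ((b*c) * Real.cosh x + ((b^2+c^2)/2) * Real.sinh x) := by
  unfold hypOp
  rw [show (fun y => ((fun y => a + b * Real.cosh (y / 2) + c * Real.sinh (y / 2)) y) ^ 2)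
      = H (a^2 + (b^2 - c^2)/2) (2*a*b) (2*a*c) ((b^2 + c^2)/2) (b*c) from sq_eq a b c,
    iteratedDeriv3_H, deriv_H]
  unfold H
  ring

theorem hyperbolic_invariant_subspace_iff (β γ : ℝ) :
    (∀ a b c : ℝ, ∃ a' b' c' : ℝ, ∀ x : ℝ,
        hypOp β γ (fun y => a + b * Real.cosh (y / 2) + c * Real.sinh (y / 2)) x =
          a' + b' * Real.cosh (x / 2) + c' * Real.sinh (x / 2)) ↔
      β + γ = 0 := by
  constructor
  · intro h
    obtain ⟨a', b', c', he⟩ := h 0 1 1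
    have key : ∀ x : ℝ, (β + γ) * (Real.cosh x + Real.sinh x) =
        a' + b' * Real.cosh (x/2) + c' * Real.sinh (x/2) := by
      intro x
      have := he x
      rw [hypOp_eq] at this
      linarith [this]
    -- difference at x and -x: 2(β+γ) sinh x = 2 c' sinh (x/2)
    have diff : ∀ x : ℝ, (β + γ) * Real.sinh x = c' * Real.sinh (x/2) := by
      intro x
      have h1 := key x
      have h2 := key (-x)
      rw [Real.cosh_neg, Real.sinh_neg] at h2
      have : (-x)/2 = -(x/2) := by ring
      rw [this, Real.cosh_neg, Real.sinh_neg] at h2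
      linarith
    have dval : ∀ t : ℝ, (β + γ) * (2 * t * Real.cosh (Real.arsinh t)) = c' * t := by
      intro t
      have := diff (2 * Real.arsinh t)
      have harg : (2 * Real.arsinh t) / 2 = Real.arsinh t := by ring
      rw [harg, Real.sinh_arsinh] at this
      have hdouble : Real.sinh (2 * Real.arsinh t)
          = 2 * Real.sinh (Real.arsinh t) * Real.cosh (Real.arsinh t) := by
        rw [two_mul, Real.sinh_add]; ring
      rw [hdouble, Real.sinh_arsinh] at this
      linarith
    have e1 := dval 1
    have e2 := dval (Real.sqrt 3)
    have c1 : Real.cosh (Real.arsinh 1) = Real.sqrt 2 := by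
      rw [Real.cosh_arsinh]; norm_num
    have c2 : Real.cosh (Real.arsinh (Real.sqrt 3)) = 2 := by
      rw [Real.cosh_arsinh]
      rw [Real.sq_sqrt (by norm_num : (3:ℝ) ≥ 0)]
      rw [show (1:ℝ) + 3 = 4 by norm_num]
      rw [show (4:ℝ) = 2^2 by norm_num, Real.sqrt_sq (by norm_num : (2:ℝ) ≥ 0)]
    rw [c1] at e1
    rw [c2] at e2
    have hs3 : Real.sqrt 3 ≠ 0 := by positivity
    have e2' : (β + γ) * 4 = c' := by
      have h0 : ((β + γ) * 4 - c') * Real.sqrt 3 = 0 := by linear_combination e2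
      rcases mul_eq_zero.1 h0 with h' | h'
      · linarith
      · exact absurd h' hs3
    have e1' : (β + γ) * (2 * Real.sqrt 2) = c' := by linarith
    have hsq2 : Real.sqrt 2 < 2 := by
      nlinarith [Real.sq_sqrt (by norm_num : (2:ℝ) ≥ 0), Real.sqrt_nonneg 2]
    nlinarith [Real.sqrt_nonneg 2]
  · intro h a b c
    refine ⟨0, β * (2*a*c/8) + γ * (2*a*c/2), β * (2*a*b/8) + γ * (2*a*b/2), fun x => ?_⟩
    rw [hypOp_eq, h]
    ring
end
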